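/- arXiv:2109.13216 — 8 statements merged into one kernel-verified Lean document; each statement's English description precedes it below -/
import Mathlib

section
/- If i and k are distinct vertices of 𝒟, j is a common neighbor of i and k, and there is a demand d ∈ Dem(j) with d ∈ Srv(i) and d ∈ Srv(k), then i and k are not both Forbidden w.r.t. 𝒟 (i.e., two nodes serving a common demand of a common neighbor cannot both leave the dominating set). -/
/-- A vertex `i` is Satisfied w.r.t. `D`. -/
def SddsSatisfied {V : Type*} {S : Type*} (G : SimpleGraph V)
    (Dem Srv : V → Set S) (D : Set V) (i : V) : Prop :=
  i ∈ D ∨ ∀ d ∈ Dem i, ∃ j, G.Adj i j ∧ d ∈ Srv j ∧ j ∈ D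

/-- `D` is an SDDS dominating set. -/
def SddsDominating {V : Type*} {S : Type*} (G : SimpleGraph V)
    (Dem Srv : V → Set S) (D : Set V) : Prop :=
  ∀ i, SddsSatisfied G Dem Srv D i

/-- A vertex `i` is Removable w.r.t. `D`. -/
def SddsRemovable {V : Type*} {S : Type*} (G : SimpleGraph V)
    (Dem Srv : V → Set S) (D : Set V) (i : V) : Prop :=
  (∀ d ∈ Dem i, ∃ j, G.Adj i j ∧ d ∈ Srv j ∧ j ∈ D) ∧
  (∀ j, G.Adj i j → ∀ d ∈ Dem j, d ∈ Srv i →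
    ∃ k, G.Adj j k ∧ k ≠ i ∧ d ∈ Srv k ∧ k ∈ D)

/-- A vertex `i` is Forbidden w.r.t. `D`. -/
def SddsForbidden {V : Type*} {S : Type*} (G : SimpleGraph V)
    (Dem Srv : V → Set S) (id : V → ℕ) (D : Set V) (i : V) : Prop :=
  i ∈ D ∧ SddsRemovable G Dem Srv D i ∧
  ∀ j, G.Adj i j → ∀ d ∈ Dem j, d ∈ Srv i →
    ∀ k, G.Adj j k → k ≠ i → d ∈ Srv k → k ∈ D →
      (id k < id i ∨ ¬ SddsRemovable G Dem Srv D k)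

/-- two distinct members of `D` serving a common demand of a common
neighbor cannot both be Forbidden. -/
theorem sdds_not_both_forbidden {V : Type*} [Fintype V] {S : Type*}
    (G : SimpleGraph V) (Dem Srv : V → Set S) (id : V → ℕ)
    (hid : Function.Injective id) (D : Set V) (i k j : V) (d : S)
    (hik : i ≠ k) (hiD : i ∈ D) (hkD : k ∈ D)
    (hij : G.Adj i j) (hkj : G.Adj k j)
    (hd : d ∈ Dem j) (hdi : d ∈ Srv i) (hdk : d ∈ Srv k) :
    ¬ (SddsForbidden G Dem Srv id D i ∧ SddsForbidden G Dem Srv id D k) := by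
  rintro ⟨⟨_, hiRem, hiF⟩, ⟨_, hkRem, hkF⟩⟩
  have h1 := hiF j hij d hd hdi k (G.adj_symm hkj) (Ne.symm hik) hdk hkD
  have h2 := hkF j hkj d hd hdk i (G.adj_symm hij) hik hdi hiD
  rcases h1 with h1 | h1
  · rcases h2 with h2 | h2
    · exact absurd (h1.trans h2) (lt_irrefl _)
    · exact h2 hiRem
  · exact h1 hkRem
end

section
/- If 𝒟 is an SDDS dominating set and at least one vertex of 𝒟 is Removable w.r.t. 𝒟, then the set 𝒟' = 𝒟 \ {i : i is Forbidden w.r.t. 𝒟} is an SDDS dominating set with |𝒟'| ≤ |𝒟| − 1. -/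
/-- if some member of `D` is Removable, removing all Forbidden vertices
yields an SDDS dominating set of size at most `|D| - 1`. -/
theorem sdds_remove_all_forbidden_card {V : Type*} [Fintype V] {S : Type*}
    (G : SimpleGraph V) (Dem Srv : V → Set S) (id : V → ℕ)
    (hid : Function.Injective id) (D : Set V)
    (hD : SddsDominating G Dem Srv D)
    (hrem : ∃ i ∈ D, SddsRemovable G Dem Srv D i) :
    SddsDominating G Dem Srv (D \ {i | SddsForbidden G Dem Srv id D i}) ∧
    (D \ {i | SddsForbidden G Dem Srv id D i}).ncard ≤ D.ncard - 1 := by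
  classical
  have hVfin : ∀ (s : Set V), s.Finite := fun s => s.toFinite
  -- Claim: any demand with a witness in D has a non-Forbidden witness in D.
  have claim : ∀ i, ∀ d ∈ Dem i, (∃ j, G.Adj i j ∧ d ∈ Srv j ∧ j ∈ D) →
      ∃ j, G.Adj i j ∧ d ∈ Srv j ∧ j ∈ D \ {i | SddsForbidden G Dem Srv id D i} := by
    intro i d hd hex
    by_contra h
    push_neg at h
    have hall : ∀ j, G.Adj i j → d ∈ Srv j → j ∈ D →
        SddsForbidden G Dem Srv id D j := by
      intro j ha hs hjD
      by_contra hf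
      exact hf (h j ha hs ⟨hjD, fun hc => (hf hc).elim⟩ |>.elim)
    -- take a witness with minimal id
    obtain ⟨j, hjW, hmin⟩ := Set.exists_min_image
      {j | G.Adj i j ∧ d ∈ Srv j ∧ j ∈ D} id (hVfin _) hex
    obtain ⟨hij, hjs, hjD⟩ := hjW
    have hjF := hall j hij hjs hjD
    obtain ⟨-, hjrem, hjforb⟩ := hjF
    obtain ⟨k, hik, hkj, hks, hkD⟩ := hjrem.2 i hij.symm d hd hjs
    have hkW : k ∈ {j | G.Adj i j ∧ d ∈ Srv j ∧ j ∈ D} := ⟨hik, hks, hkD⟩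
    have hkrem : SddsRemovable G Dem Srv D k := (hall k hik hks hkD).2.1
    rcases hjforb i hij.symm d hd hjs k hik hkj hks hkD with hlt | hnrem
    · exact absurd (hmin k hkW) (not_le.mpr hlt)
    · exact hnrem hkrem
  constructor
  · intro i
    by_cases hiD' : i ∈ D \ {i | SddsForbidden G Dem Srv id D i}
    · exact Or.inl hiD'
    · refine Or.inr fun d hd => ?_
      by_cases hiD : i ∈ D
      · have hiF : SddsForbidden G Dem Srv id D i := by
          by_contra hf
          exact hiD' ⟨hiD, hf⟩
        exact claim i d hd (hiF.2.1.1 d hd)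
      · rcases hD i with h | h
        · exact absurd h hiD
        · exact claim i d hd (h d hd)
  · -- there exists a Forbidden vertex: take removable member of D with max id
    obtain ⟨f, hfR, hmax⟩ := Set.exists_max_image
      {i | i ∈ D ∧ SddsRemovable G Dem Srv D i} id (hVfin _) hrem
    obtain ⟨hfD, hfrem⟩ := hfR
    have hfF : SddsForbidden G Dem Srv id D f := by
      refine ⟨hfD, hfrem, fun j haj d hd hds k hjk hkf hks hkD => ?_⟩
      by_cases hkrem : SddsRemovable G Dem Srv D k
      · left
        have hle := hmax k ⟨hkD, hkrem⟩
        exact lt_of_le_of_ne hle (fun he => hkf (hid he))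
      · exact Or.inr hkrem
    have hsub : D \ {i | SddsForbidden G Dem Srv id D i} ⊆ D \ {f} := by
      intro x hx
      exact ⟨hx.1, fun hxe => hx.2 (by simpa [Set.mem_singleton_iff.mp hxe] using hfF)⟩
    calc (D \ {i | SddsForbidden G Dem Srv id D i}).ncard
        ≤ (D \ {f}).ncard := Set.ncard_le_ncard hsub (hVfin _)
      _ = D.ncard - 1 := Set.ncard_diff_singleton_of_mem hfD
end

section
/- If 𝒟 is a minimal SDDS dominating set (𝒟 is an SDDS dominating set and for every i ∈ 𝒟, 𝒟 \ {i} is not an SDDS dominating set), then no vertex is Unsatisfied w.r.t. 𝒟 and no vertex is Forbidden w.r.t. 𝒟; in particular both actions of the algorithm are disabled at every vertex. -/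
/-- A vertex `i` is Unsatisfied w.r.t. `D`: it is not Satisfied. -/
def SddsUnsatisfied {V : Type*} {S : Type*} (G : SimpleGraph V)
    (Dem Srv : V → Set S) (D : Set V) (i : V) : Prop :=
  ¬ SddsSatisfied G Dem Srv D i

/-- in a minimal SDDS dominating set, no vertex is Unsatisfied and
no vertex is Forbidden (both actions of the algorithm are disabled everywhere). -/
theorem sdds_minimal_silent {V : Type*} [Fintype V] {S : Type*}
    (G : SimpleGraph V) (Dem Srv : V → Set S) (id : V → ℕ)
    (hid : Function.Injective id) (D : Set V)
    (hD : SddsDominating G Dem Srv D)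
    (hmin : ∀ i ∈ D, ¬ SddsDominating G Dem Srv (D \ {i})) :
    (∀ i, ¬ SddsUnsatisfied G Dem Srv D i) ∧
    (∀ i, ¬ SddsForbidden G Dem Srv id D i) := by
  constructor
  · intro i hi; exact hi (hD i)
  · rintro i ⟨hiD, ⟨hrem1, hrem2⟩, -⟩
    apply hmin i hiD
    intro v
    by_cases hv : v ∈ D \ {i}
    · exact Or.inl hv
    · right
      intro d hd
      by_cases hvi : v = i
      · subst hvi
        obtain ⟨j, hadj, hdj, hjD⟩ := hrem1 d hd
        exact ⟨j, hadj, hdj, hjD, fun h => G.ne_of_adj hadj (h.symm)⟩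
      · rcases hD v with hvD | hsat
        · exact absurd ⟨hvD, hvi⟩ hv
        · obtain ⟨j, hadj, hdj, hjD⟩ := hsat d hd
          by_cases hji : j = i
          · subst hji
            obtain ⟨k, hk1, hk2, hk3, hk4⟩ :=
              hrem2 v (hadj.symm) d hd hdj
            exact ⟨k, hk1, hk3, hk4, hk2⟩
          · exact ⟨j, hadj, hdj, hjD, hji⟩
end

section
/- If 𝒱 is a vertex cover of G, then 𝒱 \ {i ∈ V : i is Forbidden-VC w.r.t. 𝒱} is a vertex cover of G; that is, when all Forbidden-VC vertices leave the cover simultaneously, every edge remains covered. -/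
/-- `C` is a vertex cover of `G`: every edge has an endpoint in `C`. -/
def IsVertexCover {V : Type*} (G : SimpleGraph V) (C : Set V) : Prop :=
  ∀ i j, G.Adj i j → i ∈ C ∨ j ∈ C

/-- A vertex `i` is Unsatisfied-VC w.r.t. `C`: `i ∉ C` and some neighbor is not in `C`. -/
def UnsatisfiedVC {V : Type*} (G : SimpleGraph V) (C : Set V) (i : V) : Prop :=
  i ∉ C ∧ ∃ j, G.Adj i j ∧ j ∉ C

/-- A vertex `i` is Removable-VC w.r.t. `C`: every neighbor of `i` is in `C`. -/
def RemovableVC {V : Type*} (G : SimpleGraph V) (C : Set V) (i : V) : Prop :=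
  ∀ j, G.Adj i j → j ∈ C

/-- A vertex `i` is Forbidden-VC w.r.t. `C`. -/
def ForbiddenVC {V : Type*} (G : SimpleGraph V) (id : V → ℕ) (C : Set V) (i : V) : Prop :=
  i ∈ C ∧ RemovableVC G C i ∧
  ∀ j, G.Adj i j → (id j < id i ∨ ¬ RemovableVC G C j)

/-- removing all Forbidden-VC vertices simultaneously preserves covering. -/
theorem vc_remove_all_forbidden {V : Type*} [Fintype V] (G : SimpleGraph V)
    (id : V → ℕ) (hid : Function.Injective id) (C : Set V)
    (hC : IsVertexCover G C) :
    IsVertexCover G (C \ {i | ForbiddenVC G id C i}) := by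
  intro i j hadj
  by_cases hiC : i ∈ C
  · by_cases hif : ForbiddenVC G id C i
    · -- i forbidden; show j ∈ C \ forbidden
      right
      have hjC : j ∈ C := hif.2.1 j hadj
      refine ⟨hjC, ?_⟩
      intro hjf
      rcases hif.2.2 j hadj with h | h
      · rcases hjf.2.2 i hadj.symm with h' | h'
        · omega
        · exact h' hif.2.1
      · exact h hjf.2.1
    · exact Or.inl ⟨hiC, hif⟩
  · -- i ∉ C, so j ∈ C by cover; j not removable (i neighbor not in C), so not forbidden
    right
    have hjC : j ∈ C := (hC i j hadj).resolve_left hiC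
    refine ⟨hjC, fun hjf => hiC (hjf.2.1 i hadj.symm)⟩
end

section
/- If 𝒱 is a vertex cover of G that is not minimal (i.e., there exists i ∈ 𝒱 such that 𝒱 \ {i} is still a vertex cover), then 𝒱' = 𝒱 \ {i : i is Forbidden-VC w.r.t. 𝒱} is a vertex cover with |𝒱'| ≤ |𝒱| − 1. -/
/-- from a non-minimal vertex cover, removing all Forbidden-VC vertices
gives a vertex cover of size at most `|C| - 1`. -/
theorem vc_remove_all_forbidden_card {V : Type*} [Fintype V] (G : SimpleGraph V)
    (id : V → ℕ) (hid : Function.Injective id) (C : Set V)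
    (hC : IsVertexCover G C)
    (hnotmin : ∃ i ∈ C, IsVertexCover G (C \ {i})) :
    IsVertexCover G (C \ {i | ForbiddenVC G id C i}) ∧
    (C \ {i | ForbiddenVC G id C i}).ncard ≤ C.ncard - 1 := by
  -- no two adjacent vertices are both forbidden
  have hnoadj : ∀ i j, G.Adj i j → ForbiddenVC G id C i → ForbiddenVC G id C j → False := by
    intro i j hij ⟨hiC, hiR, hiF⟩ ⟨hjC, hjR, hjF⟩
    rcases hiF j hij with h | h
    · rcases hjF i hij.symm with h' | h'
      · omega
      · exact h' hiR
    · exact h hjR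
  constructor
  · intro i j hij
    rcases hC i j hij with hi | hj
    · by_cases hfi : ForbiddenVC G id C i
      · right
        refine ⟨hfi.2.1 j hij, fun hfj => hnoadj i j hij hfi hfj⟩
      · exact Or.inl ⟨hi, hfi⟩
    · by_cases hfj : ForbiddenVC G id C j
      · left
        refine ⟨hfj.2.1 i hij.symm, fun hfi => hnoadj i j hij hfi hfj⟩
      · exact Or.inr ⟨hj, hfj⟩
  · -- there exists a forbidden vertex
    obtain ⟨i0, hi0C, hi0cov⟩ := hnotmin
    have hi0R : RemovableVC G C i0 := by
      intro j hij
      rcases hi0cov i0 j hij with h | h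
      · exact absurd rfl h.2
      · exact h.1
    classical
    -- set of removable vertices in C, nonempty finset
    have : ∃ i, ForbiddenVC G id C i := by
      obtain ⟨m, hm, hmax⟩ := Finset.exists_max_image
        (Finset.univ.filter (fun i => i ∈ C ∧ RemovableVC G C i)) id
        ⟨i0, by simp [hi0C, hi0R]⟩
      simp only [Finset.mem_filter] at hm hmax
      refine ⟨m, hm.2.1, hm.2.2, fun j hmj => ?_⟩
      by_cases hjR : RemovableVC G C j
      · left
        have hjC : j ∈ C := hm.2.2 j hmj
        have := hmax j ⟨Finset.mem_univ j, hjC, hjR⟩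
        have hne : id j ≠ id m := fun h => hmj.ne' (hid h)
        omega
      · exact Or.inr hjR
    obtain ⟨f, hf⟩ := this
    have hsub : C \ {i | ForbiddenVC G id C i} ⊆ C \ {f} := by
      intro x hx
      exact ⟨hx.1, fun h => hx.2 (h ▸ hf)⟩
    have hfin : C.Finite := Set.toFinite C
    have h1 : (C \ {i | ForbiddenVC G id C i}).ncard ≤ (C \ {f}).ncard :=
      Set.ncard_le_ncard hsub hfin.diff
    have h2 : (C \ {f}).ncard = C.ncard - 1 := by
      rw [Set.ncard_diff_singleton_of_mem hf.1]
    omega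
end

section
/- If 𝒱 is a minimal vertex cover of G (𝒱 is a vertex cover and for every i ∈ 𝒱, 𝒱 \ {i} is not a vertex cover), then no vertex is Unsatisfied-VC w.r.t. 𝒱 and no vertex is Forbidden-VC w.r.t. 𝒱. -/
/-- in a minimal vertex cover, no vertex is Unsatisfied-VC and
no vertex is Forbidden-VC. -/
theorem vc_minimal_silent {V : Type*} [Fintype V] (G : SimpleGraph V)
    (id : V → ℕ) (hid : Function.Injective id) (C : Set V)
    (hC : IsVertexCover G C)
    (hmin : ∀ i ∈ C, ¬ IsVertexCover G (C \ {i})) :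
    (∀ i, ¬ UnsatisfiedVC G C i) ∧ (∀ i, ¬ ForbiddenVC G id C i) := by
  constructor
  · rintro i ⟨hiC, j, hadj, hjC⟩
    rcases hC i j hadj with h | h
    · exact hiC h
    · exact hjC h
  · rintro i ⟨hiC, hrem, -⟩
    apply hmin i hiC
    intro a b hab
    rcases hC a b hab with h | h
    · by_cases ha : a = i
      · subst ha
        right
        exact ⟨hrem b hab, hab.ne'.symm ∘ Eq.symm⟩
      · exact Or.inl ⟨h, ha⟩
    · by_cases hb : b = i
      · subst hb
        left
        exact ⟨hrem a hab.symm, fun h' => hab.ne h'⟩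
      · exact Or.inr ⟨h, hb⟩
end

section
/- If ℐ is an independent set of G, then ℐ ∪ {i ∈ V : i is Forbidden-IS w.r.t. ℐ} is an independent set of G; that is, when all Forbidden-IS vertices enter the set simultaneously, independence is preserved. -/
/-- `I` is an independent set of `G`: no two adjacent vertices are both in `I`. -/
def IsIndependentSet {V : Type*} (G : SimpleGraph V) (I : Set V) : Prop :=
  ∀ i j, G.Adj i j → ¬ (i ∈ I ∧ j ∈ I)

/-- A vertex `i` is Unsatisfied-IS w.r.t. `I`: `i ∈ I` and some neighbor is in `I`. -/
def UnsatisfiedIS {V : Type*} (G : SimpleGraph V) (I : Set V) (i : V) : Prop :=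
  i ∈ I ∧ ∃ j, G.Adj i j ∧ j ∈ I

/-- A vertex `i` is Addable w.r.t. `I`: no neighbor of `i` is in `I`. -/
def AddableIS {V : Type*} (G : SimpleGraph V) (I : Set V) (i : V) : Prop :=
  ∀ j, G.Adj i j → j ∉ I

/-- A vertex `i` is Forbidden-IS w.r.t. `I`. -/
def ForbiddenIS {V : Type*} (G : SimpleGraph V) (id : V → ℕ) (I : Set V) (i : V) : Prop :=
  i ∉ I ∧ AddableIS G I i ∧
  ∀ j, G.Adj i j → (id j < id i ∨ ¬ AddableIS G I j)

/-- adding all Forbidden-IS vertices simultaneously preserves independence. -/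
theorem is_add_all_forbidden {V : Type*} [Fintype V] (G : SimpleGraph V)
    (id : V → ℕ) (hid : Function.Injective id) (I : Set V)
    (hI : IsIndependentSet G I) :
    IsIndependentSet G (I ∪ {i | ForbiddenIS G id I i}) := by
  rintro i j hadj ⟨hi | hi, hj | hj⟩
  · exact hI i j hadj ⟨hi, hj⟩
  · exact hj.2.1 i hadj.symm hi
  · exact hi.2.1 j hadj hj
  · rcases hi.2.2 j hadj with h | h
    · rcases hj.2.2 i hadj.symm with h' | h'
      · exact absurd (h.trans h') (lt_irrefl _)
      · exact h' hi.2.1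
    · exact h hj.2.1
end

section
/- Suppose the coloring color is proper (no vertex is Conflicted). Let color' : V → ℕ be any function such that color'(i) = color(i) for every vertex i that is not Forbidden-GC, and for every Forbidden-GC vertex i, no neighbor j of i has color(j) = color'(i). Then color' is proper, i.e., no two adjacent vertices have the same color' value; in other words, when all Forbidden-GC vertices simultaneously recolor to a color unused by their neighbors, properness of the coloring is preserved. -/
/-- A vertex `i` is Conflicted: some neighbor has the same color. -/
def ConflictedGC {V : Type*} (G : SimpleGraph V) (color : V → ℕ) (i : V) : Prop :=
  ∃ j, G.Adj i j ∧ color j = color i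

/-- A vertex `i` is Subtractable: there is a color `c` with `1 ≤ c ≤ deg i + 1`,
`c < color i`, and no neighbor of `i` has color `c`. -/
def SubtractableGC {V : Type*} [Fintype V] (G : SimpleGraph V) [DecidableRel G.Adj]
    (color : V → ℕ) (i : V) : Prop :=
  ∃ c, 1 ≤ c ∧ c ≤ G.degree i + 1 ∧ c < color i ∧ ∀ j, G.Adj i j → color j ≠ c

/-- A vertex `i` is Forbidden-GC. -/
def ForbiddenGC {V : Type*} [Fintype V] (G : SimpleGraph V) [DecidableRel G.Adj]
    (id : V → ℕ) (color : V → ℕ) (i : V) : Prop :=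
  ¬ ConflictedGC G color i ∧ SubtractableGC G color i ∧
  ∀ j, G.Adj i j → (id j < id i ∨ ¬ SubtractableGC G color j)

/-- if `color` is proper and all Forbidden-GC vertices simultaneously
recolor to a color unused by their neighbors (others keeping their color), the
resulting coloring `color'` is proper. -/
theorem gc_recolor_forbidden_proper {V : Type*} [Fintype V] (G : SimpleGraph V)
    [DecidableRel G.Adj] (id : V → ℕ) (hid : Function.Injective id)
    (color color' : V → ℕ)
    (hproper : ∀ i, ¬ ConflictedGC G color i)
    (hkeep : ∀ i, ¬ ForbiddenGC G id color i → color' i = color i)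
    (hnew : ∀ i, ForbiddenGC G id color i → ∀ j, G.Adj i j → color j ≠ color' i) :
    ∀ i j, G.Adj i j → color' i ≠ color' j := by
  intro i j hadj heq
  by_cases hi : ForbiddenGC G id color i
  · by_cases hj : ForbiddenGC G id color j
    · -- both forbidden: contradiction via ids
      rcases hi.2.2 j hadj with h1 | h1
      · rcases hj.2.2 i hadj.symm with h2 | h2
        · omega
        · exact h2 hi.2.1
      · exact h1 hj.2.1
    · have := hnew i hi j hadj
      rw [hkeep j hj] at heq
      exact this heq.symm
  · by_cases hj : ForbiddenGC G id color j
    · have := hnew j hj i hadj.symm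
      rw [hkeep i hi] at heq
      exact this heq
    · rw [hkeep i hi, hkeep j hj] at heq
      exact hproper i ⟨j, hadj, heq.symm⟩
end
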